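/- arXiv:0805.1598 — 5 statements merged into one kernel-verified Lean document; each statement's English description precedes it below -/
import Mathlib

section
/- Let k ≥ 1 and let σ be the permutation of {1, …, 3^k − 1} given by σ(i) = 2i mod 3^k. Then the orbit of 1 under σ is exactly the set of integers in {1, …, 3^k − 1} coprime to 3. -/
/-!
By lifting the exponent, `v₃(4ⁿ - 1) = 1 + v₃(n)`; since also `2ⁿ ≡ 1 (mod 3)` forces `n`
even, `2` has order `2·3^(k-1) = φ(3^k)` modulo `3^k`. Hence `2` generates `(ℤ/3^k)ˣ`, and
the orbit `{2^t mod 3^k}` of `1` consists of all residues prime to `3`.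
-/

lemma padicValNat_three_four_pow_sub_one {n : ℕ} (hn : n ≠ 0) :
    padicValNat 3 (4 ^ n - 1) = 1 + padicValNat 3 n := by
  simpa using padicValNat.pow_sub_pow (p := 3) (x := 4) (y := 1) (by decide) (by norm_num)
    (by norm_num) (by norm_num) hn

lemma three_pow_succ_dvd_four_pow_sub_one_iff {j n : ℕ} (hn : n ≠ 0) :
    3 ^ (j + 1) ∣ 4 ^ n - 1 ↔ 3 ^ j ∣ n := by
  have hpos : 4 ^ n - 1 ≠ 0 := Nat.sub_ne_zero_of_lt (Nat.one_lt_pow hn (by norm_num))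
  rw [padicValNat_dvd_iff_le hpos, padicValNat_dvd_iff_le hn,
    padicValNat_three_four_pow_sub_one hn]
  omega

namespace ZMod

lemma even_of_two_pow_eq_one {N n : ℕ} (hN : 3 ∣ N) (h : (2 : ZMod N) ^ n = 1) : Even n := by
  have h3 := congrArg (castHom hN (ZMod 3)) h
  rw [map_pow, map_ofNat, map_one, show (2 : ZMod 3) = -1 by decide] at h3
  exact (neg_one_pow_eq_one_iff_even (by decide)).mp h3

lemma two_pow_two_mul_eq_one_iff (j m : ℕ) :
    (2 : ZMod (3 ^ (j + 1))) ^ (2 * m) = 1 ↔ 3 ^ j ∣ m := by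
  rcases eq_or_ne m 0 with rfl | hm
  · simp
  have hcast : ((4 ^ m - 1 : ℕ) : ZMod (3 ^ (j + 1))) = 0 ↔ 3 ^ (j + 1) ∣ 4 ^ m - 1 :=
    natCast_eq_zero_iff _ _
  rw [Nat.cast_sub (Nat.one_le_pow _ _ (by norm_num)), sub_eq_zero,
    three_pow_succ_dvd_four_pow_sub_one_iff hm] at hcast
  rw [← hcast, pow_mul]
  norm_num

lemma two_pow_eq_one_iff (j n : ℕ) :
    (2 : ZMod (3 ^ (j + 1))) ^ n = 1 ↔ 2 * 3 ^ j ∣ n := by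
  constructor
  · intro h
    have hn : Even n := even_of_two_pow_eq_one (dvd_pow_self 3 j.succ_ne_zero) h
    obtain ⟨m, rfl⟩ := even_iff_two_dvd.mp hn
    exact mul_dvd_mul_left 2 ((two_pow_two_mul_eq_one_iff j m).mp h)
  · rintro ⟨c, rfl⟩
    rw [mul_assoc, two_pow_two_mul_eq_one_iff]
    exact dvd_mul_right _ _

lemma orderOf_two_three_pow_succ (j : ℕ) :
    orderOf (2 : ZMod (3 ^ (j + 1))) = Nat.totient (3 ^ (j + 1)) := by
  rw [Nat.totient_prime_pow_succ Nat.prime_three, mul_comm]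
  exact Nat.dvd_antisymm (orderOf_dvd_iff_pow_eq_one.mpr ((two_pow_eq_one_iff j _).mpr dvd_rfl))
    ((two_pow_eq_one_iff j _).mp (pow_orderOf_eq_one _))

lemma exists_pow_eq_of_orderOf_eq_totient {n : ℕ} [NeZero n] {g x : ZMod n}
    (hg : orderOf g = Nat.totient n) (hx : IsUnit x) : ∃ t : ℕ, g ^ t = x := by
  have hg_fin : IsOfFinOrder g := orderOf_pos_iff.mp (by simp [hg, NeZero.pos n])
  set u := hg_fin.isUnit.unit
  have htop : Subgroup.zpowers u = ⊤ := by
    refine Subgroup.eq_top_of_card_eq _ ?_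
    rw [Nat.card_zpowers, ← orderOf_units, IsUnit.unit_spec, hg, Nat.card_eq_fintype_card,
      card_units_eq_totient]
  obtain ⟨t, ht⟩ : hx.unit ∈ Submonoid.powers u := by
    rw [mem_powers_iff_mem_zpowers, htop]
    exact Subgroup.mem_top _
  exact ⟨t, by simpa [u] using congrArg Units.val ht⟩

end ZMod

/-- For k ≥ 1 and σ(i) = 2i mod 3^k on {1,…,3^k−1}, the orbit of 1 under σ is
exactly the set of integers in {1,…,3^k−1} coprime to 3. -/
theorem orbit_of_one_in_shuffle (k : ℕ) (hk : 1 ≤ k) :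
    ∀ m : ℕ, 1 ≤ m → m ≤ 3 ^ k - 1 →
      ((∃ t : ℕ, 2 ^ t * 1 % 3 ^ k = m) ↔ Nat.Coprime m 3) := by
  intro m _ hm_le
  obtain ⟨j, rfl⟩ : ∃ j, k = j + 1 := ⟨k - 1, by omega⟩
  have hm_lt : m < 3 ^ (j + 1) := by
    have : 0 < 3 ^ (j + 1) := by positivity
    omega
  simp only [mul_one]
  constructor
  · rintro ⟨t, rfl⟩
    rw [Nat.coprime_comm, Nat.Prime.coprime_iff_not_dvd Nat.prime_three,
      Nat.dvd_mod_iff (dvd_pow_self 3 j.succ_ne_zero)]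
    exact (Nat.Prime.coprime_iff_not_dvd Nat.prime_three).mp (Nat.Coprime.pow_right _ (by norm_num))
  · intro hm
    have hm_unit : IsUnit (m : ZMod (3 ^ (j + 1))) :=
      (ZMod.isUnit_iff_coprime m _).mpr (hm.pow_right _)
    obtain ⟨t, ht⟩ :=
      ZMod.exists_pow_eq_of_orderOf_eq_totient (ZMod.orderOf_two_three_pow_succ j) hm_unit
    refine ⟨t, ?_⟩
    rw [← ZMod.val_natCast, Nat.cast_pow, Nat.cast_ofNat, ht, ZMod.val_natCast,
      Nat.mod_eq_of_lt hm_lt]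
end

section
/- Let k ≥ 1, 0 ≤ s < k, and let σ be the permutation of {1, …, 3^k − 1} given by σ(i) = 2i mod 3^k. Then the orbit of 3^s under σ consists exactly of those m in {1, …, 3^k − 1} such that 3^s divides m but 3^(s+1) does not divide m. -/
/-- Key computation: `4^(3^j) = 1 + 3^(j+1) * (1 + 3c)` for some `c`. -/
lemma fourpow (j : ℕ) : ∃ c : ℕ, 4 ^ 3 ^ j = 1 + 3 ^ (j + 1) * (1 + 3 * c) := by
  induction j with
  | zero => exact ⟨0, by norm_num⟩
  | succ j ih =>
    obtain ⟨c, hc⟩ := ih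
    refine ⟨c + 3 ^ j * (1 + 3 * c) ^ 2 + 3 ^ j * 3 ^ j * (1 + 3 * c) ^ 3, ?_⟩
    have h1 : 4 ^ 3 ^ (j + 1) = (4 ^ 3 ^ j) ^ 3 := by
      rw [pow_succ, pow_mul]
    rw [h1, hc]
    ring

lemma exists_pow_two_mod (N u : ℕ) (hN : 1 ≤ N) (hu : ¬ 3 ∣ u) (hlt : u < 3 ^ N) :
    ∃ t : ℕ, 2 ^ t % 3 ^ N = u := by
  haveI : NeZero (3 ^ N) := ⟨by positivity⟩
  have hcop2 : Nat.Coprime 2 (3 ^ N) := Nat.Coprime.pow_right _ (by norm_num)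
  set u2 : (ZMod (3 ^ N))ˣ := ZMod.unitOfCoprime 2 hcop2 with hu2
  have hu2coe : (u2 : ZMod (3 ^ N)) = ((2 : ℕ) : ZMod (3 ^ N)) := ZMod.coe_unitOfCoprime 2 hcop2
  -- order of u2^2 (i.e. of 4) is 3^(N-1)
  have h4coe : ∀ t : ℕ, ((u2 ^ 2) ^ t : (ZMod (3 ^ N))ˣ) = 1 ↔ ((4 ^ t : ℕ) : ZMod (3 ^ N)) = 1 := by
    intro t
    constructor
    · intro h
      have := congrArg (Units.val) h
      push_cast [hu2coe] at this ⊢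
      rw [show (4 : ZMod (3 ^ N)) = 2 ^ 2 by norm_num]
      exact this
    · intro h
      apply Units.ext
      push_cast [hu2coe] at h ⊢
      rw [show (4 : ZMod (3 ^ N)) = 2 ^ 2 by norm_num] at h
      exact h
  have hpow1 : (u2 ^ 2) ^ 3 ^ (N - 1) = 1 := by
    rw [h4coe]
    obtain ⟨c, hc⟩ := fourpow (N - 1)
    have hN1 : N - 1 + 1 = N := Nat.succ_pred_eq_of_pos hN
    rw [hc, hN1, Nat.cast_add, Nat.cast_mul, Nat.cast_one, ZMod.natCast_self, zero_mul, add_zero]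
  have hd4 : orderOf (u2 ^ 2) = 3 ^ (N - 1) := by
    have hdvd : orderOf (u2 ^ 2) ∣ 3 ^ (N - 1) := orderOf_dvd_of_pow_eq_one hpow1
    obtain ⟨e, he, hee⟩ := (Nat.dvd_prime_pow Nat.prime_three).mp hdvd
    rcases eq_or_lt_of_le he with h | h
    · rw [hee, h]
    · exfalso
      have hpos : 0 < N - 1 := lt_of_le_of_lt (Nat.zero_le e) h
      have hN2 : e ≤ N - 1 - 1 := Nat.le_pred_of_lt h
      have : (u2 ^ 2) ^ 3 ^ (N - 1 - 1) = 1 := by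
        apply orderOf_dvd_iff_pow_eq_one.mp
        rw [hee]
        exact pow_dvd_pow 3 hN2
      rw [h4coe] at this
      obtain ⟨c, hc⟩ := fourpow (N - 1 - 1)
      have hN1 : N - 1 - 1 + 1 = N - 1 := Nat.succ_pred_eq_of_pos hpos
      rw [hc, hN1] at this
      have h1 : ((1 : ℕ) : ZMod (3 ^ N)) = 1 := by push_cast; rfl
      rw [← h1] at this
      have hmod : 1 + 3 ^ (N - 1) * (1 + 3 * c) ≡ 1 [MOD 3 ^ N] :=
        (ZMod.natCast_eq_natCast_iff _ _ _).mp this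
      have hdd : 3 ^ N ∣ 3 ^ (N - 1) * (1 + 3 * c) := by
        have := (Nat.modEq_iff_dvd' (by omega)).mp hmod.symm
        simpa using this
      have h3N : 3 ^ N = 3 ^ (N - 1) * 3 := by
        rw [← pow_succ]; congr 1; omega
      rw [h3N] at hdd
      have := (Nat.mul_dvd_mul_iff_left (a := 3 ^ (N - 1)) (by positivity)).mp hdd
      omega
  -- order of u2 is 2 * 3^(N-1)
  have hd2 : orderOf u2 = 2 * 3 ^ (N - 1) := by
    have hdvd1 : orderOf u2 ∣ 2 * 3 ^ (N - 1) := by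
      apply orderOf_dvd_of_pow_eq_one
      rw [pow_mul, hpow1]
    have hdvd2 : 3 ^ (N - 1) ∣ orderOf u2 := by
      rw [← hd4]
      apply orderOf_dvd_of_pow_eq_one
      rw [← pow_mul, mul_comm, pow_mul, pow_orderOf_eq_one, one_pow]
    have hdvd3 : 2 ∣ orderOf u2 := by
      have h3 : (3 : ℕ) ∣ 3 ^ N := dvd_pow_self 3 (by omega)
      let f : (ZMod (3 ^ N))ˣ →* (ZMod 3)ˣ := Units.map (ZMod.castHom h3 (ZMod 3)).toMonoidHom
      have hfcoe : ((f u2 : (ZMod 3)ˣ) : ZMod 3) = 2 := by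
        show (ZMod.castHom h3 (ZMod 3)) (u2 : ZMod (3 ^ N)) = 2
        rw [hu2coe, map_natCast]
        norm_num
      have hford : orderOf (f u2) = 2 := by
        rw [← orderOf_units, hfcoe]
        apply orderOf_eq_prime <;> decide
      rw [← hford]
      exact orderOf_map_dvd f u2
    have : 2 * 3 ^ (N - 1) ∣ orderOf u2 := by
      apply Nat.Coprime.mul_dvd_of_dvd_of_dvd _ hdvd3 hdvd2
      exact Nat.Coprime.pow_right _ (by norm_num)
    exact Nat.dvd_antisymm hdvd1 this
  -- u2 generates everything
  have hcard : Nat.card (ZMod (3 ^ N))ˣ = 2 * 3 ^ (N - 1) := by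
    rw [Nat.card_eq_fintype_card, ZMod.card_units_eq_totient,
      Nat.totient_prime_pow Nat.prime_three (by omega)]
    ring
  have htop : Subgroup.zpowers u2 = ⊤ := by
    apply Subgroup.eq_top_of_card_eq
    rw [hcard, ← hd2, Nat.card_zpowers]
  have hcopu : Nat.Coprime u (3 ^ N) :=
    Nat.Coprime.pow_right _ ((Nat.prime_three.coprime_iff_not_dvd).mpr hu).symm
  set uu : (ZMod (3 ^ N))ˣ := ZMod.unitOfCoprime u hcopu with huu
  have hmem : uu ∈ Submonoid.powers u2 := by
    rw [mem_powers_iff_mem_zpowers, htop]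
    trivial
  obtain ⟨t, ht⟩ := hmem
  have ht' : u2 ^ t = uu := ht
  refine ⟨t, ?_⟩
  have hcoe : ((2 ^ t : ℕ) : ZMod (3 ^ N)) = ((u : ℕ) : ZMod (3 ^ N)) :=
    calc ((2 ^ t : ℕ) : ZMod (3 ^ N)) = ((u2 : ZMod (3 ^ N))) ^ t := by
          rw [hu2coe]; push_cast; ring
      _ = ((u2 ^ t : (ZMod (3 ^ N))ˣ) : ZMod (3 ^ N)) := (Units.val_pow_eq_pow_val _ _).symm
      _ = (uu : ZMod (3 ^ N)) := by rw [ht']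
      _ = ((u : ℕ) : ZMod (3 ^ N)) := ZMod.coe_unitOfCoprime u hcopu
  have := (ZMod.natCast_eq_natCast_iff _ _ _).mp hcoe
  rw [Nat.ModEq, Nat.mod_eq_of_lt hlt] at this
  exact this

/-- For k ≥ 1, 0 ≤ s < k, and σ(i) = 2i mod 3^k on {1,…,3^k−1}, the orbit of
3^s under σ consists exactly of those m with 3^s ∣ m and 3^(s+1) ∤ m. -/
theorem orbit_of_three_pow_in_shuffle (k s : ℕ) (hk : 1 ≤ k) (hs : s < k) :
    ∀ m : ℕ, 1 ≤ m → m ≤ 3 ^ k - 1 →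
      ((∃ t : ℕ, 2 ^ t * 3 ^ s % 3 ^ k = m) ↔ (3 ^ s ∣ m ∧ ¬ 3 ^ (s + 1) ∣ m)) := by
  intro m hm1 hm2
  set N := k - s with hN
  have hN1 : 1 ≤ N := by omega
  have hsplit : 3 ^ k = 3 ^ N * 3 ^ s := by rw [← pow_add]; congr 1; omega
  constructor
  · rintro ⟨t, rfl⟩
    rw [hsplit, Nat.mul_mod_mul_right]
    set v := 2 ^ t % 3 ^ N with hv
    have h3v : ¬ 3 ∣ v := by
      intro h
      have hmm : v % 3 = 2 ^ t % 3 := Nat.mod_mod_of_dvd _ (dvd_pow_self 3 (by omega))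
      have : (3 : ℕ) ∣ 2 ^ t := by
        rw [Nat.dvd_iff_mod_eq_zero] at h ⊢
        omega
      exact absurd (Nat.Prime.dvd_of_dvd_pow Nat.prime_three this) (by norm_num)
    refine ⟨dvd_mul_left _ _, ?_⟩
    intro h
    rw [pow_succ, mul_comm (3 ^ s) 3] at h
    exact h3v ((Nat.mul_dvd_mul_iff_right (show 0 < 3 ^ s by positivity)).mp h)
  · rintro ⟨⟨u, hu⟩, hnd⟩
    have h3u : ¬ 3 ∣ u := by
      intro h
      apply hnd
      obtain ⟨w, hw⟩ := h
      exact ⟨w, by rw [hu, hw, pow_succ]; ring⟩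
    have hult : u < 3 ^ N := by
      have hmk : m < 3 ^ k := by
        have : 0 < 3 ^ k := by positivity
        omega
      have hmlt : 3 ^ s * u < 3 ^ s * 3 ^ N := by
        calc 3 ^ s * u = m := hu.symm
          _ < 3 ^ k := hmk
          _ = 3 ^ s * 3 ^ N := by rw [← pow_add]; congr 1; omega
      exact Nat.lt_of_mul_lt_mul_left hmlt
    obtain ⟨t, ht⟩ := exists_pow_two_mod N u hN1 h3u hult
    refine ⟨t, ?_⟩
    rw [hsplit, Nat.mul_mod_mul_right, ht, hu]
    ring
end

section
/- Let k ≥ 1 and let σ be the permutation of {1, …, 3^k − 1} given by σ(i) = 2i mod 3^k. Then σ has exactly k cycles, with representatives 1, 3, 3², …, 3^(k−1), each in a distinct cycle. -/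
/-- 2 generates the units mod 3^n. -/
lemma exists_pow_two_modEq (n : ℕ) (hn : 1 ≤ n) (u : ℕ) (hu : ¬ 3 ∣ u) :
    ∃ t : ℕ, 2 ^ t ≡ u [MOD 3 ^ n] := by
  haveI : NeZero (3 ^ n) := ⟨by positivity⟩
  have h2c : Nat.Coprime 2 (3 ^ n) := Nat.Coprime.pow_right _ (by decide)
  set x : (ZMod (3 ^ n))ˣ := ZMod.unitOfCoprime 2 h2c with hx
  have hcard : Fintype.card (ZMod (3 ^ n))ˣ = 2 * 3 ^ (n - 1) := by
    rw [ZMod.card_units_eq_totient, Nat.totient_prime_pow Nat.prime_three hn]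
    ring
  -- a helper: if x ^ m = 1 then 2 ^ m ≡ 1 [MOD 3 ^ n]
  have hpow : ∀ m : ℕ, x ^ m = 1 → 2 ^ m ≡ 1 [MOD 3 ^ n] := by
    intro m hm
    have : ((2 : ℕ) : ZMod (3 ^ n)) ^ m = ((1 : ℕ) : ZMod (3 ^ n)) := by
      have := congrArg (Units.val) hm
      simpa [hx, ZMod.coe_unitOfCoprime] using this
    rw [← Nat.cast_pow, ZMod.natCast_eq_natCast_iff] at this
    exact this
  have hord : orderOf x = 2 * 3 ^ (n - 1) := by
    apply orderOf_eq_of_pow_and_pow_div_prime (by positivity)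
    · rw [← hcard]; exact pow_card_eq_one
    · intro p hp hpd hone
      have hp23 : p = 2 ∨ p = 3 := by
        rcases (hp.dvd_mul.mp hpd) with h | h
        · exact Or.inl ((Nat.prime_dvd_prime_iff_eq hp Nat.prime_two).mp h)
        · exact Or.inr ((Nat.prime_dvd_prime_iff_eq hp Nat.prime_three).mp
            (hp.dvd_of_dvd_pow h))
      rcases hp23 with rfl | rfl
      · -- p = 2 : 2 ^ (3 ^ (n-1)) ≢ 1 mod 3, since exponent is odd
        have hdiv : 2 * 3 ^ (n - 1) / 2 = 3 ^ (n - 1) := by omega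
        rw [hdiv] at hone
        have hmod := (hpow _ hone).of_dvd (dvd_pow_self 3 (by omega : n ≠ 0))
        obtain ⟨j, hj⟩ := (by decide : Odd 3).pow (n := n - 1)
        rw [hj] at hmod
        have h4 : (4 : ℕ) ^ j ≡ 1 [MOD 3] := by
          have := Nat.ModEq.pow j (show (4:ℕ) ≡ 1 [MOD 3] by decide)
          simpa using this
        have : (2 : ℕ) ^ (2 * j + 1) ≡ 2 [MOD 3] := by
          calc (2:ℕ) ^ (2 * j + 1) = 4 ^ j * 2 := by rw [pow_succ, pow_mul]; norm_num
          _ ≡ 1 * 2 [MOD 3] := h4.mul_right 2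
          _ = 2 := by ring
        have := (this.symm.trans hmod)
        exact absurd this (by decide)
      · -- p = 3 : needs n ≥ 2, LTE
        have hn2 : 2 ≤ n := by
          by_contra h
          interval_cases n
          revert hpd; decide
        have hdiv : 2 * 3 ^ (n - 1) / 3 = 2 * 3 ^ (n - 2) := by
          have : n - 1 = (n - 2) + 1 := by omega
          rw [this, pow_succ]
          omega
        rw [hdiv] at hone
        have hmod := hpow _ hone
        have h41 : (4 : ℕ) ^ (3 ^ (n - 2)) ≡ 1 [MOD 3 ^ n] := by
          have : (2:ℕ) ^ (2 * 3 ^ (n-2)) = 4 ^ (3 ^ (n-2)) := by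
            rw [pow_mul]; norm_num
          rwa [this] at hmod
        have hdvd : 3 ^ n ∣ 4 ^ (3 ^ (n - 2)) - 1 := by
          have h1le : 1 ≤ (4:ℕ) ^ (3 ^ (n - 2)) := Nat.one_le_pow _ _ (by norm_num)
          exact (Nat.modEq_iff_dvd' h1le).mp h41.symm
        -- LTE : v₃(4^(3^(n-2)) - 1) = 1 + (n-2)
        haveI : Fact (Nat.Prime 3) := ⟨Nat.prime_three⟩
        have hlte : padicValNat 3 (4 ^ (3 ^ (n-2)) - 1 ^ (3 ^ (n-2)))
            = padicValNat 3 (4 - 1) + padicValNat 3 (3 ^ (n-2)) :=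
          padicValNat.pow_sub_pow (by decide) (by norm_num) (by norm_num)
            (by norm_num) (Nat.pow_pos (by norm_num)).ne'
        rw [one_pow] at hlte
        have hval : padicValNat 3 (4 ^ (3 ^ (n-2)) - 1) = n - 1 := by
          rw [hlte]
          rw [padicValNat.prime_pow, (by norm_num : (4:ℕ) - 1 = 3),
            padicValNat.self (by norm_num)]
          omega
        have hne : 4 ^ (3 ^ (n-2)) - 1 ≠ 0 := by
          have : (4:ℕ) ^ (3 ^ (n-2)) ≥ 4 ^ 1 :=
            Nat.pow_le_pow_right (by norm_num) (Nat.one_le_pow _ _ (by norm_num))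
          omega
        have hle : n ≤ padicValNat 3 (4 ^ (3 ^ (n-2)) - 1) :=
          (padicValNat_dvd_iff_le hne).mp hdvd
        omega
  -- x generates the group
  have htop : Subgroup.zpowers x = ⊤ := by
    apply Subgroup.eq_top_of_card_eq
    rw [Nat.card_zpowers, hord, Nat.card_eq_fintype_card, hcard]
  have huc : Nat.Coprime u (3 ^ n) :=
    Nat.Coprime.pow_right _ ((Nat.coprime_comm).mp
      ((Nat.Prime.coprime_iff_not_dvd Nat.prime_three).mpr hu))
  set uu : (ZMod (3 ^ n))ˣ := ZMod.unitOfCoprime u huc with huu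
  have : uu ∈ Subgroup.zpowers x := htop ▸ Subgroup.mem_top uu
  obtain ⟨t, ht⟩ := mem_powers_iff_mem_zpowers.mpr this
  refine ⟨t, ?_⟩
  have : ((2 : ℕ) : ZMod (3 ^ n)) ^ t = ((u : ℕ) : ZMod (3 ^ n)) := by
    have := congrArg (Units.val) ht
    simpa [hx, huu, ZMod.coe_unitOfCoprime] using this
  rw [← Nat.cast_pow, ZMod.natCast_eq_natCast_iff] at this
  exact this

/-- For k ≥ 1 and σ(i) = 2i mod 3^k on {1,…,3^k−1}, σ has exactly k cycles,
with representatives 1, 3, 3², …, 3^(k−1) each in a distinct cycle: every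
element lies in the orbit of exactly one 3^s with s < k. -/
theorem in_shuffle_exactly_k_cycles (k : ℕ) (hk : 1 ≤ k) :
    ∀ m : ℕ, 1 ≤ m → m ≤ 3 ^ k - 1 →
      ∃! s : ℕ, s < k ∧ ∃ t : ℕ, 2 ^ t * 3 ^ s % 3 ^ k = m := by
  intro m hm1 hm2
  have hmne : m ≠ 0 := by omega
  have h3k : 0 < (3:ℕ) ^ k := by positivity
  have hmlt : m < 3 ^ k := by omega
  set s := m.factorization 3 with hs
  have hsd : 3 ^ s ∣ m := Nat.ordProj_dvd m 3
  have hund : ¬ 3 ∣ m / 3 ^ s := Nat.not_dvd_ordCompl Nat.prime_three hmne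
  have hsk : s < k := by
    have h1 : 3 ^ s ≤ m := Nat.le_of_dvd (by omega) hsd
    have : (3:ℕ) ^ s < 3 ^ k := lt_of_le_of_lt h1 hmlt
    exact (Nat.pow_lt_pow_iff_right (by norm_num)).mp this
  -- any valid s' equals the 3-adic valuation of m
  have huniq : ∀ s' : ℕ, s' < k → (∃ t : ℕ, 2 ^ t * 3 ^ s' % 3 ^ k = m) → s' = s := by
    intro s' hs'k ⟨t, ht⟩
    have hdvd3k : (3:ℕ) ^ s' ∣ 3 ^ k := pow_dvd_pow 3 (le_of_lt hs'k)
    have hd1 : 3 ^ s' ∣ m := by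
      rw [← ht]
      exact (Nat.dvd_mod_iff hdvd3k).mpr (dvd_mul_left _ _)
    have hd2 : ¬ 3 ^ (s' + 1) ∣ m := by
      intro hcon
      have hdvd3k' : (3:ℕ) ^ (s' + 1) ∣ 3 ^ k := pow_dvd_pow 3 hs'k
      rw [← ht] at hcon
      have : (3:ℕ) ^ (s' + 1) ∣ 2 ^ t * 3 ^ s' := (Nat.dvd_mod_iff hdvd3k').mp hcon
      rw [pow_succ, mul_comm ((2:ℕ)^t) (3 ^ s')] at this
      have h3d : (3:ℕ) ∣ 2 ^ t :=
        (mul_dvd_mul_iff_left (by positivity : (3:ℕ)^s' ≠ 0)).mp this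
      have := Nat.prime_three.dvd_of_dvd_pow h3d
      norm_num at this
    have hle1 : s' ≤ s := (Nat.Prime.pow_dvd_iff_le_factorization Nat.prime_three hmne).mp hd1
    have hle2 : ¬ (s' + 1 ≤ s) := fun h =>
      hd2 ((Nat.Prime.pow_dvd_iff_le_factorization Nat.prime_three hmne).mpr h)
    omega
  refine ⟨s, ⟨hsk, ?_⟩, fun s' hs' => huniq s' hs'.1 hs'.2⟩
  -- existence of t
  obtain ⟨t, ht⟩ := exists_pow_two_modEq (k - s) (by omega) (m / 3 ^ s) hund
  refine ⟨t, ?_⟩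
  have hmeq : 3 ^ s * (m / 3 ^ s) = m := Nat.mul_div_cancel' hsd
  have h1 : 2 ^ t * 3 ^ s ≡ (m / 3 ^ s) * 3 ^ s [MOD 3 ^ (k - s) * 3 ^ s] :=
    ht.mul_right' _
  have h2 : (3:ℕ) ^ (k - s) * 3 ^ s = 3 ^ k := by
    rw [← pow_add]; congr 1; omega
  have h3 : m / 3 ^ s * 3 ^ s = m := Nat.div_mul_cancel hsd
  rw [h2, h3] at h1
  calc 2 ^ t * 3 ^ s % 3 ^ k = m % 3 ^ k := h1
  _ = m := Nat.mod_eq_of_lt hmlt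
end

section
/- Let k ≥ 1 and σ(i) = 2i mod 3^k on {1, …, 3^k − 1}. The sets O_s = {m ∈ {1,…,3^k−1} : 3^s ∣ m and 3^(s+1) ∤ m} for s = 0, …, k−1 partition {1, …, 3^k − 1}, and each O_s is a single orbit of σ. -/
/-!
Since `4 = 1 + 3` has order `3^n` modulo `3^(n+1)` and `2 ≡ -1 (mod 3)` has even order, `2` has
order `2 · 3^n = φ(3^(n+1))` and so generates `(ZMod (3^(n+1)))ˣ`. Writing `m = 3^s u` with
`3 ∤ u`, the unit `u` modulo `3^(k-s)` is some `2^t`, whence `m ≡ 2^t 3^s (mod 3^k)`; conversely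
`2^t 3^s mod 3^k` has `3`-adic valuation exactly `s`.
-/

theorem orderOf_two_zmod_three_pow (n : ℕ) : orderOf (2 : ZMod (3 ^ (n + 1))) = 2 * 3 ^ n := by
  have h4 : orderOf ((2 : ZMod (3 ^ (n + 1))) ^ 2) = 3 ^ n := by
    convert ZMod.orderOf_one_add_prime Nat.prime_three (by norm_num) n using 2
    norm_num
  have h2 : 2 ∣ orderOf (2 : ZMod (3 ^ (n + 1))) := by
    have hmod3 : orderOf (2 : ZMod 3) = 2 := orderOf_eq_prime (by decide) (by decide)
    have := orderOf_map_dvd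
      (ZMod.castHom (dvd_pow_self 3 n.succ_ne_zero) (ZMod 3)).toMonoidHom 2
    rwa [RingHom.toMonoidHom_eq_coe, MonoidHom.coe_coe, map_ofNat, hmod3] at this
  obtain ⟨e, he⟩ := h2
  rw [orderOf_pow' _ two_ne_zero, he, Nat.gcd_mul_right_left,
    Nat.mul_div_cancel_left _ two_pos] at h4
  rw [he, h4]

theorem exists_two_pow_modEq_three_pow {u : ℕ} (hu : u.Coprime 3) (j : ℕ) :
    ∃ t, 2 ^ t ≡ u [MOD 3 ^ j] := by
  obtain _ | n := j
  · exact ⟨0, Nat.modEq_one⟩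
  have hu' : u.Coprime (3 ^ (n + 1)) := hu.pow_right _
  let two : (ZMod (3 ^ (n + 1)))ˣ := ZMod.unitOfCoprime 2 (Nat.Coprime.pow_right _ (by norm_num))
  have hgen : Subgroup.zpowers two = ⊤ := by
    rw [← Subgroup.card_eq_iff_eq_top, Nat.card_zpowers, ← orderOf_units, Nat.card_eq_fintype_card,
      ZMod.card_units_eq_totient, Nat.totient_prime_pow_succ Nat.prime_three]
    simpa [two, mul_comm] using orderOf_two_zmod_three_pow n
  obtain ⟨t, ht⟩ :=
    mem_powers_iff_mem_zpowers.mpr (hgen ▸ Subgroup.mem_top (ZMod.unitOfCoprime u hu'))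
  refine ⟨t, (ZMod.natCast_eq_natCast_iff _ _ _).mp ?_⟩
  simpa [two] using congrArg Units.val ht

theorem pow_dvd_and_not_pow_succ_dvd_iff {p m s : ℕ} [Fact p.Prime] (hm : m ≠ 0) :
    p ^ s ∣ m ∧ ¬ p ^ (s + 1) ∣ m ↔ padicValNat p m = s := by
  rw [padicValNat_dvd_iff_le hm, padicValNat_dvd_iff_le hm]
  omega

theorem pow_dvd_and_not_pow_succ_dvd_mul_pow_mod {p a s k : ℕ} (hp : p.Prime) (ha : ¬ p ∣ a)
    (hsk : s < k) : p ^ s ∣ a * p ^ s % p ^ k ∧ ¬ p ^ (s + 1) ∣ a * p ^ s % p ^ k := by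
  rw [Nat.dvd_mod_iff (pow_dvd_pow p hsk.le), Nat.dvd_mod_iff (pow_dvd_pow p hsk), pow_succ,
    mul_comm a, Nat.mul_dvd_mul_iff_left (pow_pos hp.pos s)]
  exact ⟨dvd_mul_right _ _, ha⟩

theorem exists_two_pow_mul_three_pow_mod_eq {s k m : ℕ} (hmk : m < 3 ^ k) (hs : 3 ^ s ∣ m)
    (hs' : ¬ 3 ^ (s + 1) ∣ m) : ∃ t, 2 ^ t * 3 ^ s % 3 ^ k = m := by
  obtain ⟨u, rfl⟩ := hs
  have hu : ¬ 3 ∣ u := fun h => hs' (pow_succ 3 s ▸ mul_dvd_mul_left _ h)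
  have hsk : s ≤ k := by
    have hu0 : u ≠ 0 := by rintro rfl; exact hu (dvd_zero 3)
    have : 3 ^ s < 3 ^ k := (Nat.le_mul_of_pos_right _ (Nat.pos_of_ne_zero hu0)).trans_lt hmk
    exact ((Nat.pow_lt_pow_iff_right (by norm_num)).mp this).le
  obtain ⟨t, ht⟩ := exists_two_pow_modEq_three_pow
    (Nat.prime_three.coprime_iff_not_dvd.mpr hu).symm (k - s)
  refine ⟨t, ?_⟩
  have := ht.mul_right' (3 ^ s)
  rwa [← pow_add, Nat.sub_add_cancel hsk, mul_comm u, Nat.ModEq, Nat.mod_eq_of_lt hmk] at this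

theorem in_shuffle_orbit_partition_general (k : ℕ) :
    (∀ m : ℕ, 1 ≤ m → m ≤ 3 ^ k - 1 →
        ∃! s : ℕ, s < k ∧ 3 ^ s ∣ m ∧ ¬ 3 ^ (s + 1) ∣ m) ∧
    (∀ s : ℕ, s < k → ∀ m : ℕ, 1 ≤ m → m ≤ 3 ^ k - 1 →
        ((3 ^ s ∣ m ∧ ¬ 3 ^ (s + 1) ∣ m) ↔ ∃ t : ℕ, 2 ^ t * 3 ^ s % 3 ^ k = m)) := by
  have : Fact (Nat.Prime 3) := ⟨Nat.prime_three⟩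
  have hk : 0 < 3 ^ k := by positivity
  refine ⟨fun m hm1 hmk => ⟨padicValNat 3 m, ⟨?_, ?_⟩, fun s hs => ?_⟩,
    fun s hsk m _ hmk => ⟨fun hs => exists_two_pow_mul_three_pow_mod_eq (by omega) hs.1 hs.2, ?_⟩⟩
  · have : 3 ^ padicValNat 3 m < 3 ^ k :=
      (Nat.le_of_dvd hm1 pow_padicValNat_dvd).trans_lt (by omega)
    exact (Nat.pow_lt_pow_iff_right (by norm_num)).mp this
  · exact (pow_dvd_and_not_pow_succ_dvd_iff (by omega)).mpr rfl
  · exact ((pow_dvd_and_not_pow_succ_dvd_iff (by omega)).mp hs.2).symm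
  · rintro ⟨t, rfl⟩
    exact pow_dvd_and_not_pow_succ_dvd_mul_pow_mod Nat.prime_three
      (fun h => by have := Nat.Prime.dvd_of_dvd_pow Nat.prime_three h; omega) hsk

/-- For k ≥ 1 and σ(i) = 2i mod 3^k on {1,…,3^k−1}, the sets
O_s = {m : 3^s ∣ m, 3^(s+1) ∤ m} for s < k partition {1,…,3^k−1},
and each O_s is a single orbit of σ (the orbit of 3^s). -/
theorem in_shuffle_orbit_partition (k : ℕ) (hk : 1 ≤ k) :
    (∀ m : ℕ, 1 ≤ m → m ≤ 3 ^ k - 1 →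
        ∃! s : ℕ, s < k ∧ 3 ^ s ∣ m ∧ ¬ 3 ^ (s + 1) ∣ m) ∧
    (∀ s : ℕ, s < k → ∀ m : ℕ, 1 ≤ m → m ≤ 3 ^ k - 1 →
        ((3 ^ s ∣ m ∧ ¬ 3 ^ (s + 1) ∣ m) ↔ ∃ t : ℕ, 2 ^ t * 3 ^ s % 3 ^ k = m)) :=
  in_shuffle_orbit_partition_general k
end

section
/- Let n ≥ 1 and τ(i) = 2i mod (2n+1) on {1, …, 2n}. For each i, the length of the cycle of τ containing i equals the multiplicative order of 2 modulo (2n+1)/gcd(i, 2n+1). -/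
/-- For n ≥ 1, τ(i) = 2i mod (2n+1) on {1,…,2n}: the length of the cycle of τ
containing i equals the multiplicative order of 2 modulo (2n+1)/gcd(i,2n+1). -/
theorem in_shuffle_cycle_length (n : ℕ) (hn : 1 ≤ n) (i : ℕ) (hi1 : 1 ≤ i)
    (hi2 : i ≤ 2 * n) :
    IsLeast {t : ℕ | 0 < t ∧ 2 ^ t * i % (2 * n + 1) = i}
      (orderOf (2 : ZMod ((2 * n + 1) / Nat.gcd i (2 * n + 1)))) := by
  set N := 2 * n + 1 with hN
  set d := Nat.gcd i N with hd
  set m := N / d with hm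
  have hdN : d ∣ N := Nat.gcd_dvd_right i N
  have hdi : d ∣ i := Nat.gcd_dvd_left i N
  have hd0 : 0 < d := Nat.gcd_pos_of_pos_left _ hi1
  have hNd : m * d = N := Nat.div_mul_cancel hdN
  have hdlt : d < N := lt_of_le_of_lt (Nat.le_of_dvd hi1 hdi) (by omega)
  have hm1 : 1 < m := by
    rcases Nat.lt_or_ge m 2 with h | h
    · interval_cases m <;> omega
    · omega
  have hmN : m ∣ N := ⟨d, hNd.symm⟩
  have hNodd : N % 2 = 1 := by omega
  have hmodd : m % 2 = 1 := by
    rcases Nat.mod_two_eq_zero_or_one m with h | h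
    · exfalso
      have h2 : 2 ∣ N := dvd_trans (Nat.dvd_of_mod_eq_zero h) hmN
      omega
    · exact h
  have key : ∀ t : ℕ, 2 ^ t * i % N = i ↔ (2 : ZMod m) ^ t = 1 := by
    intro t
    have hiN : i % N = i := Nat.mod_eq_of_lt (by omega)
    have hcast : (2 : ZMod m) ^ t = 1 ↔ (2:ℕ)^t ≡ 1 [MOD m] := by
      rw [show ((2:ℕ)^t ≡ 1 [MOD m]) ↔ (((2:ℕ)^t : ℕ) : ZMod m) = ((1:ℕ) : ZMod m)
        from (ZMod.natCast_eq_natCast_iff _ _ _).symm]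
      push_cast
      tauto
    constructor
    · intro h
      have h' : 2 ^ t * i ≡ 1 * i [MOD N] := by
        rw [one_mul]; unfold Nat.ModEq; rw [h, hiN]
      have h2 := Nat.ModEq.cancel_right_div_gcd (show 0 < N by omega) h'
      rw [Nat.gcd_comm] at h2
      exact hcast.mpr h2
    · intro h
      have h1 : (2:ℕ)^t ≡ 1 [MOD m] := hcast.mp h
      have h2 := (Nat.ModEq.mul_right' (c := d) h1).mul_right (i / d)
      rw [hNd, one_mul, mul_assoc, Nat.mul_div_cancel' hdi] at h2
      unfold Nat.ModEq at h2
      rw [hiN] at h2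
      exact h2
  haveI : NeZero m := ⟨by omega⟩
  have hu : IsUnit (2 : ZMod m) := by
    have hc : Nat.Coprime 2 m := by
      exact Nat.coprime_two_left.mpr (Nat.odd_iff.mpr hmodd)
    have := (ZMod.isUnit_iff_coprime 2 m).mpr hc
    simpa using this
  constructor
  · refine ⟨?_, (key _).mpr (pow_orderOf_eq_one _)⟩
    have hpos : 0 < orderOf hu.unit := orderOf_pos _
    have he : ((hu.unit : (ZMod m)ˣ) : ZMod m) = 2 := hu.unit_spec
    rw [← he, orderOf_units] at *
    exact hpos
  · rintro t ⟨ht0, ht⟩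
    exact orderOf_le_of_pow_eq_one ht0 ((key t).mp ht)
end
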